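/- arXiv:2407.09664 — 3 statements merged into one kernel-verified Lean document; each statement's English description precedes it below -/
import Mathlib

section
/- Chatterjee's first lemma: under the exchangeable-pair setup, if there is a finite constant M > 0 with P(V ≤ M) = 1, then E[exp(λ f(X))] ≤ exp(M λ²/2) for every λ ∈ ℝ, and consequently P(f(X) ≥ t) ≤ exp(−t²/(2M)) for every t ≥ 0. -/
open MeasureTheory Real ProbabilityTheory
open scoped ENNReal NNReal

/-!
Write `m(λ) = E[exp (λ f(X))]`. Pulling `exp (λ f(X))` out of `E[F(X, X') | X] = f(X)` and then
using exchangeability and antisymmetry gives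
`m'(λ) = E[f(X) e^{λ f(X)}] = ½ E[(e^{λ f(X)} - e^{λ f(X')}) F(X, X')]`.
The bound `|e^a - e^b| ≤ |a - b| (e^a + e^b) / 2` and exchangeability once more turn this into
`|m'(λ)| ≤ |λ| E[e^{λ f(X)} V] ≤ M |λ| m(λ)`, and integrating this differential inequality gives
`m(λ) ≤ exp (M λ² / 2)`. So `f(X)` is sub-Gaussian with variance proxy `M`, and the tail bound is
Chernoff's.
-/

theorem Real.exp_sub_one_le_mul_exp_add_one {t : ℝ} (ht : 0 ≤ t) :
    exp t - 1 ≤ t * (exp t + 1) / 2 := by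
  let h : ℝ → ℝ := fun s => s * (exp s + 1) / 2 - (exp s - 1)
  have hderiv : ∀ s, HasDerivAt h (((exp s + 1) + s * exp s) / 2 - exp s) s := fun s => by
    have := ((((hasDerivAt_id s).mul ((hasDerivAt_exp s).add_const 1)).div_const 2).sub
      ((hasDerivAt_exp s).sub_const 1))
    exact this.congr_deriv (by simp only [id, one_mul])
  have hmono : MonotoneOn h (Set.Ici 0) := by
    refine monotoneOn_of_hasDerivWithinAt_nonneg (convex_Ici 0)
      (fun s _ => (hderiv s).continuousAt.continuousWithinAt)
      (fun s _ => (hderiv s).hasDerivWithinAt) fun s _ => ?_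
    -- `1 - s ≤ exp (-s)` multiplied by `exp s`
    have h1 := add_one_le_exp (-s)
    have h2 : exp (-s) * exp s = 1 := by rw [← exp_add, neg_add_cancel, exp_zero]
    nlinarith [exp_pos s]
  have := hmono Set.self_mem_Ici ht ht
  simp only [h, exp_zero] at this
  linarith

theorem Real.abs_exp_sub_exp_le (a b : ℝ) :
    |exp a - exp b| ≤ |a - b| * (exp a + exp b) / 2 := by
  wlog hba : b ≤ a generalizing a b
  · rw [abs_sub_comm, abs_sub_comm a, add_comm]
    exact this b a (le_of_not_ge hba)
  have key := exp_sub_one_le_mul_exp_add_one (sub_nonneg.2 hba)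
  have hexp : exp a = exp b * exp (a - b) := by rw [← exp_add, add_sub_cancel]
  rw [abs_of_nonneg (sub_nonneg.2 (exp_le_exp.2 hba)), abs_of_nonneg (sub_nonneg.2 hba), hexp]
  nlinarith [exp_pos b]

theorem le_mul_exp_of_abs_hasDerivAt_le {g g' : ℝ → ℝ} {M : ℝ}
    (hg : ∀ x, HasDerivAt g (g' x) x) (hg' : ∀ x, |g' x| ≤ M * |x| * g x) (x : ℝ) :
    g x ≤ g 0 * exp (M * x ^ 2 / 2) := by
  let ψ : ℝ → ℝ := fun x => g x * exp (-(M * x ^ 2 / 2))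
  have hψ : ∀ x, HasDerivAt ψ ((g' x - M * x * g x) * exp (-(M * x ^ 2 / 2))) x := fun x => by
    have := (hg x).mul ((((hasDerivAt_pow 2 x).const_mul M).div_const 2).neg.exp)
    refine this.congr_deriv ?_
    simp only [Pi.neg_apply]
    push_cast
    ring
  have hψ_cont : ContinuousOn ψ Set.univ := fun x _ => (hψ x).continuousAt.continuousWithinAt
  suffices ψ x ≤ ψ 0 by
    have hgx : g x = ψ x * exp (M * x ^ 2 / 2) := by
      rw [mul_assoc, ← exp_add, neg_add_cancel, exp_zero, mul_one]
    have hψ0 : ψ 0 = g 0 := by simp [ψ]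
    rw [hgx, ← hψ0]
    exact mul_le_mul_of_nonneg_right this (exp_pos _).le
  rcases le_total 0 x with hx | hx
  · refine antitoneOn_of_hasDerivWithinAt_nonpos (convex_Ici 0) (hψ_cont.mono (Set.subset_univ _))
      (fun s _ => (hψ s).hasDerivWithinAt) (fun s hs => ?_) Set.self_mem_Ici hx hx
    rw [interior_Ici, Set.mem_Ioi] at hs
    have := (le_abs_self _).trans (hg' s)
    rw [abs_of_pos hs] at this
    exact mul_nonpos_of_nonpos_of_nonneg (by linarith) (exp_pos _).le
  · refine monotoneOn_of_hasDerivWithinAt_nonneg (convex_Iic 0) (hψ_cont.mono (Set.subset_univ _))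
      (fun s _ => (hψ s).hasDerivWithinAt) (fun s hs => ?_) hx Set.self_mem_Iic hx
    rw [interior_Iic, Set.mem_Iio] at hs
    have := (neg_abs_le _).trans' (neg_le_neg (hg' s))
    rw [abs_of_neg hs] at this
    exact mul_nonneg (by linarith) (exp_pos _).le

section CondExp

variable {Ω : Type*} {m m₀ : MeasurableSpace Ω} {μ : Measure Ω} [IsFiniteMeasure μ]
  {G : Ω → ℝ} {c : ℝ}

theorem lintegral_mul_ofReal_le_of_condExp_le (hm : m ≤ m₀) (hG₀ : 0 ≤ᵐ[μ] G)
    (hG : Integrable G μ) (hc : μ[G|m] ≤ᵐ[μ] fun _ => c) {e : Ω → ℝ≥0∞} (he : Measurable[m] e) :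
    ∫⁻ ω, e ω * ENNReal.ofReal (G ω) ∂μ ≤ ENNReal.ofReal c * ∫⁻ ω, e ω ∂μ := by
  -- `ν = G • μ` is at most `c • μ` on `m`-measurable sets, and these are all that `e` sees.
  set ν := μ.withDensity fun ω => ENNReal.ofReal (G ω)
  have hν : ν.trim hm ≤ (ENNReal.ofReal c • μ).trim hm := by
    refine Measure.le_iff.2 fun s hs => ?_
    rw [trim_measurableSet_eq hm hs, trim_measurableSet_eq hm hs, withDensity_apply _ (hm s hs),
      ← ofReal_integral_eq_lintegral_ofReal hG.integrableOn (ae_restrict_of_ae hG₀),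
      ← setIntegral_condExp hm hG hs, Measure.smul_apply, smul_eq_mul, ← ofReal_measureReal,
      ← ENNReal.ofReal_mul' measureReal_nonneg]
    refine ENNReal.ofReal_le_ofReal ?_
    calc ∫ ω in s, μ[G|m] ω ∂μ ≤ ∫ _ in s, c ∂μ :=
          setIntegral_mono_ae integrable_condExp.integrableOn (integrable_const c).integrableOn hc
      _ = c * μ.real s := by rw [setIntegral_const, smul_eq_mul, mul_comm]
  calc ∫⁻ ω, e ω * ENNReal.ofReal (G ω) ∂μ = ∫⁻ ω, e ω ∂ν.trim hm := by
        rw [lintegral_trim hm he, lintegral_withDensity_eq_lintegral_mul₀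
          hG.aemeasurable.ennreal_ofReal (he.mono hm le_rfl).aemeasurable]
        simp_rw [Pi.mul_apply, mul_comm]
    _ ≤ ∫⁻ ω, e ω ∂(ENNReal.ofReal c • μ).trim hm := lintegral_mono' hν le_rfl
    _ = ENNReal.ofReal c * ∫⁻ ω, e ω ∂μ := by
        rw [lintegral_trim hm he, lintegral_smul_measure, smul_eq_mul]

theorem integrable_mul_of_condExp_le (hm : m ≤ m₀) (hG₀ : 0 ≤ᵐ[μ] G) (hG : Integrable G μ)
    (hc : μ[G|m] ≤ᵐ[μ] fun _ => c) {e : Ω → ℝ} (he : Measurable[m] e) (he₀ : 0 ≤ e)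
    (he_int : Integrable e μ) : Integrable (fun ω => e ω * G ω) μ := by
  have heG₀ : 0 ≤ᵐ[μ] fun ω => e ω * G ω := by
    filter_upwards [hG₀] with ω hω using mul_nonneg (he₀ ω) hω
  refine ⟨(he.mono hm le_rfl).aestronglyMeasurable.mul hG.aestronglyMeasurable,
    (hasFiniteIntegral_iff_ofReal heG₀).2 ?_⟩
  simp_rw [ENNReal.ofReal_mul (he₀ _)]
  exact (lintegral_mul_ofReal_le_of_condExp_le hm hG₀ hG hc he.ennreal_ofReal).trans_lt
    (ENNReal.mul_lt_top ENNReal.ofReal_lt_top he_int.lintegral_lt_top)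

theorem integral_mul_le_of_condExp_le (hm : m ≤ m₀) (hG₀ : 0 ≤ᵐ[μ] G) (hG : Integrable G μ)
    (hc₀ : 0 ≤ c) (hc : μ[G|m] ≤ᵐ[μ] fun _ => c) {e : Ω → ℝ} (he : Measurable[m] e)
    (he₀ : 0 ≤ e) (he_int : Integrable e μ) : ∫ ω, e ω * G ω ∂μ ≤ c * ∫ ω, e ω ∂μ := by
  have heG₀ : 0 ≤ᵐ[μ] fun ω => e ω * G ω := by
    filter_upwards [hG₀] with ω hω using mul_nonneg (he₀ ω) hω
  rw [integral_eq_lintegral_of_nonneg_ae heG₀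
    ((he.mono hm le_rfl).aestronglyMeasurable.mul hG.aestronglyMeasurable)]
  refine ENNReal.toReal_le_of_le_ofReal (mul_nonneg hc₀ (integral_nonneg he₀)) ?_
  simp_rw [ENNReal.ofReal_mul (he₀ _)]
  rw [ENNReal.ofReal_mul hc₀, ofReal_integral_eq_lintegral_ofReal he_int (ae_of_all _ he₀)]
  exact lintegral_mul_ofReal_le_of_condExp_le hm hG₀ hG hc he.ennreal_ofReal

theorem integral_mul_eq_of_condExp_eq (hm : m ≤ m₀) {h F g : Ω → ℝ}
    (hh : StronglyMeasurable[m] h)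
    (hF : Integrable F μ) (hhF : Integrable (fun ω => h ω * F ω) μ) (hFg : μ[F|m] =ᵐ[μ] g) :
    ∫ ω, h ω * F ω ∂μ = ∫ ω, h ω * g ω ∂μ := by
  calc ∫ ω, h ω * F ω ∂μ = ∫ ω, μ[h * F|m] ω ∂μ := (integral_condExp hm).symm
    _ = ∫ ω, h ω * g ω ∂μ := by
      refine integral_congr_ae ?_
      filter_upwards [condExp_mul_of_stronglyMeasurable_left hh hhF hF, hFg] with ω h1 h2
      rw [h1, Pi.mul_apply, h2]

end CondExp

theorem memLp_two_exp_mul {Ω : Type*} [MeasurableSpace Ω] {μ : Measure Ω} {Y : Ω → ℝ}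
    (hY : AEMeasurable Y μ) (l : ℝ) (hint : Integrable (fun ω => exp ((2 * l) * Y ω)) μ) :
    MemLp (fun ω => exp (l * Y ω)) 2 μ := by
  refine (memLp_two_iff_integrable_sq (by fun_prop)).2 ?_
  simp_rw [← exp_nat_mul]
  convert hint using 3
  push_cast
  ring

section ExchangeablePair

variable {Ω 𝒳 : Type*} [MeasurableSpace Ω] [MeasurableSpace 𝒳] {P : Measure Ω} {X X' : Ω → 𝒳}
  {f : 𝒳 → ℝ} {F : 𝒳 → 𝒳 → ℝ}

theorem integral_sub_mul_eq_two_mul_integral_mul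
    (hexch : IdentDistrib (fun ω => (X ω, X' ω)) (fun ω => (X' ω, X ω)) P P)
    (hF : Measurable fun p : 𝒳 × 𝒳 => F p.1 p.2) (hFanti : ∀ x y, F x y = -F y x)
    (hf : Measurable f) (hint : Integrable (fun ω => f (X ω) * F (X ω) (X' ω)) P) :
    ∫ ω, (f (X ω) - f (X' ω)) * F (X ω) (X' ω) ∂P = 2 * ∫ ω, f (X ω) * F (X ω) (X' ω) ∂P := by
  have hswap : IdentDistrib (fun ω => f (X ω) * F (X ω) (X' ω))
      (fun ω => f (X' ω) * F (X' ω) (X ω)) P P :=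
    hexch.comp ((hf.comp measurable_fst).mul hF)
  have hflip : ∀ ω, f (X' ω) * F (X ω) (X' ω) = -(f (X' ω) * F (X' ω) (X ω)) := fun ω => by
    rw [hFanti (X' ω), mul_neg, neg_neg]
  have hint' : Integrable (fun ω => f (X' ω) * F (X ω) (X' ω)) P := by
    simp_rw [hflip]
    exact (hswap.integrable_iff.1 hint).neg
  simp_rw [sub_mul]
  rw [integral_sub hint hint', integral_congr_ae (ae_of_all _ hflip), integral_neg,
    ← hswap.integral_eq]
  ring

theorem abs_integral_exp_sub_exp_mul_le
    (hexch : IdentDistrib (fun ω => (X ω, X' ω)) (fun ω => (X' ω, X ω)) P P)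
    (hF : Measurable fun p : 𝒳 × 𝒳 => F p.1 p.2) (hFanti : ∀ x y, F x y = -F y x)
    (hf : Measurable f) (l : ℝ)
    (hint : Integrable
      (fun ω => exp (l * f (X ω)) * |(f (X ω) - f (X' ω)) * F (X ω) (X' ω)|) P) :
    |∫ ω, (exp (l * f (X ω)) - exp (l * f (X' ω))) * F (X ω) (X' ω) ∂P|
      ≤ |l| * ∫ ω, exp (l * f (X ω)) * |(f (X ω) - f (X' ω)) * F (X ω) (X' ω)| ∂P := by
  set S : 𝒳 → 𝒳 → ℝ := fun x y => |(f x - f y) * F x y| with hS_def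
  have hS : (fun ω => exp (l * f (X ω)) * S (X' ω) (X ω))
      = fun ω => exp (l * f (X ω)) * S (X ω) (X' ω) := by
    ext ω
    simp only [hS_def, hFanti (X' ω) (X ω)]
    congr 2
    ring
  have hswap : IdentDistrib (fun ω => exp (l * f (X' ω)) * S (X ω) (X' ω))
      (fun ω => exp (l * f (X ω)) * S (X' ω) (X ω)) P P :=
    hexch.comp ((measurable_exp.comp ((hf.comp measurable_snd).const_mul l)).mul
      (((hf.comp measurable_fst).sub (hf.comp measurable_snd)).mul hF).abs)
  rw [hS] at hswap
  have hint' := hswap.integrable_iff.2 hint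
  calc |∫ ω, (exp (l * f (X ω)) - exp (l * f (X' ω))) * F (X ω) (X' ω) ∂P|
      ≤ ∫ ω, |(exp (l * f (X ω)) - exp (l * f (X' ω))) * F (X ω) (X' ω)| ∂P :=
        abs_integral_le_integral_abs
    _ ≤ ∫ ω, |l| / 2 * (exp (l * f (X ω)) * S (X ω) (X' ω)
          + exp (l * f (X' ω)) * S (X ω) (X' ω)) ∂P := by
        refine integral_mono_of_nonneg (ae_of_all _ fun _ => abs_nonneg _)
          ((hint.add hint').const_mul _) (ae_of_all _ fun ω => ?_)
        have := abs_exp_sub_exp_le (l * f (X ω)) (l * f (X' ω))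
        rw [← mul_sub, abs_mul] at this
        simp only [S, abs_mul]
        nlinarith [abs_nonneg (F (X ω) (X' ω))]
    _ = |l| * ∫ ω, exp (l * f (X ω)) * S (X ω) (X' ω) ∂P := by
        rw [integral_const_mul, integral_add hint hint', ← hswap.integral_eq]
        ring

theorem abs_integral_mul_exp_le_of_condExp_le [IsFiniteMeasure P] (hX : Measurable X)
    (hexch : IdentDistrib (fun ω => (X ω, X' ω)) (fun ω => (X' ω, X ω)) P P)
    (hf : Measurable f) (hL2 : Integrable (fun ω => f (X ω) ^ 2) P)
    (hmgf : ∀ t : ℝ, Integrable (fun ω => exp (t * f (X ω))) P)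
    (hF : Measurable fun p : 𝒳 × 𝒳 => F p.1 p.2) (hFanti : ∀ x y, F x y = -F y x)
    (hFL2 : Integrable (fun ω => F (X ω) (X' ω) ^ 2) P)
    (hFcond : condExp (MeasurableSpace.comap X inferInstance) P (fun ω => F (X ω) (X' ω))
      =ᵐ[P] fun ω => f (X ω))
    {M : ℝ} (hM : 0 ≤ M)
    (hV : condExp (MeasurableSpace.comap X inferInstance) P
      (fun ω => |(f (X ω) - f (X' ω)) * F (X ω) (X' ω)|) ≤ᵐ[P] fun _ => 2 * M) (l : ℝ) :
    |∫ ω, f (X ω) * exp (l * f (X ω)) ∂P| ≤ M * |l| * ∫ ω, exp (l * f (X ω)) ∂P := by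
  have hm := hX.comap_le
  have hX'X : IdentDistrib X' X P P := hexch.comp measurable_snd
  have hfX : Measurable fun ω => f (X ω) := hf.comp hX
  have he : Measurable[MeasurableSpace.comap X inferInstance] fun ω => exp (l * f (X ω)) :=
    (measurable_exp.comp (hf.const_mul l)).comp (comap_measurable X)
  have hFmem : MemLp (fun ω => F (X ω) (X' ω)) 2 P :=
    (memLp_two_iff_integrable_sq (hexch.comp hF).aemeasurable_fst.aestronglyMeasurable).2 hFL2
  have hfmem : MemLp (fun ω => f (X ω)) 2 P :=
    (memLp_two_iff_integrable_sq hfX.aestronglyMeasurable).2 hL2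
  have heF : Integrable (fun ω => exp (l * f (X ω)) * F (X ω) (X' ω)) P :=
    (memLp_two_exp_mul hfX.aemeasurable l (hmgf _)).integrable_mul hFmem
  have hG : Integrable (fun ω => |(f (X ω) - f (X' ω)) * F (X ω) (X' ω)|) P :=
    ((hfmem.sub ((hX'X.comp hf).memLp_iff.2 hfmem)).integrable_mul hFmem).abs
  have hpull : ∫ ω, f (X ω) * exp (l * f (X ω)) ∂P
      = ∫ ω, exp (l * f (X ω)) * F (X ω) (X' ω) ∂P := by
    rw [integral_mul_eq_of_condExp_eq hm he.stronglyMeasurable (hFmem.integrable one_le_two) heF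
      hFcond]
    simp_rw [mul_comm]
  have hsym := integral_sub_mul_eq_two_mul_integral_mul (f := fun x => exp (l * f x)) hexch hF
    hFanti (measurable_exp.comp (hf.const_mul l)) heF
  have heG := integrable_mul_of_condExp_le hm (ae_of_all _ fun _ => abs_nonneg _) hG hV he
    (fun _ => (exp_pos _).le) (hmgf l)
  calc |∫ ω, f (X ω) * exp (l * f (X ω)) ∂P|
      = |∫ ω, (exp (l * f (X ω)) - exp (l * f (X' ω))) * F (X ω) (X' ω) ∂P| / 2 := by
        rw [hpull, hsym, abs_mul, abs_two]
        ring
    _ ≤ |l| * (∫ ω, exp (l * f (X ω)) * |(f (X ω) - f (X' ω)) * F (X ω) (X' ω)| ∂P) / 2 := by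
        gcongr
        exact abs_integral_exp_sub_exp_mul_le hexch hF hFanti hf l heG
    _ ≤ |l| * (2 * M * ∫ ω, exp (l * f (X ω)) ∂P) / 2 := by
        gcongr
        exact integral_mul_le_of_condExp_le hm (ae_of_all _ fun _ => abs_nonneg _) hG
          (by positivity) hV he (fun _ => (exp_pos _).le) (hmgf l)
    _ = M * |l| * ∫ ω, exp (l * f (X ω)) ∂P := by ring

end ExchangeablePair

theorem ProbabilityTheory.HasSubgaussianMGF.of_abs_integral_mul_exp_le {Ω : Type*}
    [MeasurableSpace Ω] {μ : Measure Ω} [IsProbabilityMeasure μ] {Y : Ω → ℝ} {c : ℝ≥0}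
    (hint : ∀ t : ℝ, Integrable (fun ω => exp (t * Y ω)) μ)
    (hderiv : ∀ t : ℝ, |∫ ω, Y ω * exp (t * Y ω) ∂μ| ≤ c * |t| * mgf Y μ t) :
    HasSubgaussianMGF Y c μ := by
  refine ⟨hint, fun t => ?_⟩
  have hmem : ∀ s, s ∈ interior (integrableExpSet Y μ) := fun s => by
    simp [integrableExpSet, hint]
  simpa [mgf_zero] using
    le_mul_exp_of_abs_hasDerivAt_le (fun s => hasDerivAt_mgf (hmem s)) hderiv t


theorem chatterjee_first_lemma_general
    {Ω 𝒳 : Type*} [MeasurableSpace Ω] [MeasurableSpace 𝒳]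
    (P : Measure Ω) [IsProbabilityMeasure P]
    (X X' : Ω → 𝒳) (hX : Measurable X) (hX' : Measurable X')
    (hexch : P.map (fun ω => (X ω, X' ω)) = P.map (fun ω => (X' ω, X ω)))
    (f : 𝒳 → ℝ) (hf : Measurable f)
    (hL2 : Integrable (fun ω => (f (X ω)) ^ 2) P)
    (hmgf : ∀ t : ℝ, Integrable (fun ω => Real.exp (t * f (X ω))) P)
    (F : 𝒳 → 𝒳 → ℝ) (hFmeas : Measurable fun p : 𝒳 × 𝒳 => F p.1 p.2)
    (hFanti : ∀ x y, F x y = -F y x)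
    (hFL2 : Integrable (fun ω => (F (X ω) (X' ω)) ^ 2) P)
    (hFcond : MeasureTheory.condExp (MeasurableSpace.comap X inferInstance) P
        (fun ω => F (X ω) (X' ω)) =ᵐ[P] fun ω => f (X ω))
    (V : Ω → ℝ)
    (hV : V = fun ω => (1 / 2 : ℝ) *
      (MeasureTheory.condExp (MeasurableSpace.comap X inferInstance) P
        (fun ω' => |(f (X ω') - f (X' ω')) * F (X ω') (X' ω')|) ω))
    (M : ℝ) (hM : 0 < M)
    (hVbd : ∀ᵐ ω ∂P, V ω ≤ M) :
    (∀ l : ℝ, ∫ ω, Real.exp (l * f (X ω)) ∂P ≤ Real.exp (M * l ^ 2 / 2)) ∧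
    (∀ t : ℝ, 0 ≤ t →
      (P {ω | t ≤ f (X ω)}).toReal ≤ Real.exp (-(t ^ 2) / (2 * M))) := by
  have hexch' : IdentDistrib (fun ω => (X ω, X' ω)) (fun ω => (X' ω, X ω)) P P :=
    ⟨(hX.prodMk hX').aemeasurable, (hX'.prodMk hX).aemeasurable, hexch⟩
  have hcond : condExp (MeasurableSpace.comap X inferInstance) P
      (fun ω => |(f (X ω) - f (X' ω)) * F (X ω) (X' ω)|) ≤ᵐ[P] fun _ => 2 * M := by
    filter_upwards [hVbd] with ω hω
    rw [hV] at hω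
    linarith
  have hsub : HasSubgaussianMGF (fun ω => f (X ω)) ⟨M, hM.le⟩ P :=
    .of_abs_integral_mul_exp_le hmgf
      (abs_integral_mul_exp_le_of_condExp_le hX hexch' hf hL2 hmgf hFmeas hFanti hFL2 hFcond
        hM.le hcond)
  exact ⟨hsub.mgf_le, fun t ht => hsub.measure_ge_le ht⟩

theorem chatterjee_first_lemma
    {Ω 𝒳 : Type*} [MeasurableSpace Ω] [MeasurableSpace 𝒳]
    (P : Measure Ω) [IsProbabilityMeasure P]
    (X X' : Ω → 𝒳) (hX : Measurable X) (hX' : Measurable X')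
    (hexch : P.map (fun ω => (X ω, X' ω)) = P.map (fun ω => (X' ω, X ω)))
    (f : 𝒳 → ℝ) (hf : Measurable f)
    (hmean : ∫ ω, f (X ω) ∂P = 0)
    (hL2 : Integrable (fun ω => (f (X ω)) ^ 2) P)
    (hmgf : ∀ t : ℝ, Integrable (fun ω => Real.exp (t * f (X ω))) P)
    (F : 𝒳 → 𝒳 → ℝ) (hFmeas : Measurable fun p : 𝒳 × 𝒳 => F p.1 p.2)
    (hFanti : ∀ x y, F x y = -F y x)
    (hFL2 : Integrable (fun ω => (F (X ω) (X' ω)) ^ 2) P)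
    (hFcond : MeasureTheory.condExp (MeasurableSpace.comap X inferInstance) P
        (fun ω => F (X ω) (X' ω)) =ᵐ[P] fun ω => f (X ω))
    (V : Ω → ℝ)
    (hV : V = fun ω => (1 / 2 : ℝ) *
      (MeasureTheory.condExp (MeasurableSpace.comap X inferInstance) P
        (fun ω' => |(f (X ω') - f (X' ω')) * F (X ω') (X' ω')|) ω))
    (M : ℝ) (hM : 0 < M)
    (hVbd : ∀ᵐ ω ∂P, V ω ≤ M) :
    (∀ l : ℝ, ∫ ω, Real.exp (l * f (X ω)) ∂P ≤ Real.exp (M * l ^ 2 / 2)) ∧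
    (∀ t : ℝ, 0 ≤ t →
      (P {ω | t ≤ f (X ω)}).toReal ≤ Real.exp (-(t ^ 2) / (2 * M))) :=
  chatterjee_first_lemma_general P X X' hX hX' hexch f hf hL2 hmgf F hFmeas hFanti hFL2 hFcond V hV
    M hM hVbd
end

section
/- Combinatorial Bernstein inequality: for every N ≥ 1, every real N×N matrix A = (a_{i,j}) with normalized matrix D = (d_{i,j}), and every t ≥ 0, the combinatorial sum Y = Σ_{i=1}^N a_{i,π(i)} for a uniform random permutation π of [N] satisfies P( Y − E[Y] ≥ t ) ≤ exp( −t² / (12 σ_A² + 4√2 · B_A · t) ), where B_A = max_{i,j} |d_{i,j}| and σ_A² = (N−1)⁻¹ Σ_{i,j} d_{i,j}². -/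
open Finset
open scoped Classical

/-- Normalized matrix `d_{i,j} = a_{i,j} − N⁻¹Σ_k a_{k,j} − N⁻¹Σ_ℓ a_{i,ℓ} + N⁻²Σ_{k,ℓ} a_{k,ℓ}`. -/
noncomputable def dmat (N : ℕ) (a : Fin N → Fin N → ℝ) (i j : Fin N) : ℝ :=
  a i j - (∑ k, a k j) / (N : ℝ) - (∑ l, a i l) / (N : ℝ) + (∑ k, ∑ l, a k l) / ((N : ℝ) ^ 2)

/-- `μ_A = E[Y] = N⁻¹ Σ_{i,j} a_{i,j}`. -/
noncomputable def muA (N : ℕ) (a : Fin N → Fin N → ℝ) : ℝ :=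
  (∑ i, ∑ j, a i j) / (N : ℝ)

/-- `σ_A² = (N−1)⁻¹ Σ_{i,j} d_{i,j}²`. -/
noncomputable def sigmaA2 (N : ℕ) (a : Fin N → Fin N → ℝ) : ℝ :=
  (∑ i, ∑ j, (dmat N a i j) ^ 2) / ((N : ℝ) - 1)

/-- `B_A = max_{i,j∈[N]} |d_{i,j}|`. -/
noncomputable def BA (N : ℕ) (a : Fin N → Fin N → ℝ) : ℝ :=
  ⨆ i : Fin N, ⨆ j : Fin N, |dmat N a i j|

/-- The combinatorial sum `Y(π) = Σ_{i=1}^N a_{i,π(i)}`. -/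
noncomputable def combSum (N : ℕ) (a : Fin N → Fin N → ℝ) (π : Equiv.Perm (Fin N)) : ℝ :=
  ∑ i, a i (π i)

/-- Probability of an event under the uniform random permutation of `[N]`. -/
noncomputable def permProb (N : ℕ) (p : Equiv.Perm (Fin N) → Prop) : ℝ :=
  (∑ π : Equiv.Perm (Fin N), if p π then (1 : ℝ) else 0) / (Nat.factorial N : ℝ)

/-!
After centring, `Y - E[Y] = ∑ᵢ d_{i,π(i)}` where `D` has zero row sums. Composing `π` with the
transposition `(i j)` lowers this sum by `Δᵢⱼ(π) = d_{i,π i} + d_{j,π j} - d_{i,π j} - d_{j,π i}`,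
and `∑ᵢⱼ Δᵢⱼ(π) = 2N (Y - E[Y])`. This exchangeable pair, together with the convexity bound
`(u - v)(e^u - e^v) ≤ (u - v)² (e^u + e^v) / 2`, gives for `m(θ) = ∑_π e^{θ (Y - E[Y])}` the
differential inequality `N m'(θ) ≤ 2θ V (1 + e^{4θB}) m(θ)` with `V = ∑ᵢⱼ d²ᵢⱼ`, hence
`m(θ) ≤ N! exp (V/N (1 + e^{4θB}) θ²)`. Chernoff's bound at `θ = t / (6σ² + 2√2 B t)` finishes,
since `σ² (1 + e^{4θB}) ≤ 3σ² + √2 B t` there.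
-/

namespace Real

theorem two_mul_exp_sub_one_le {s : ℝ} (hs : 0 ≤ s) : 2 * (exp s - 1) ≤ s * (exp s + 1) := by
  let G : ℝ → ℝ := fun x => x * (exp x + 1) - 2 * (exp x - 1)
  have hG : ∀ x, HasDerivAt G (1 - (1 - x) * exp x) x := fun x =>
    (((hasDerivAt_id' x).mul ((hasDerivAt_exp x).add_const 1)).sub
      (((hasDerivAt_exp x).sub_const 1).const_mul 2)).congr_deriv (by ring)
  have hmono : MonotoneOn G (Set.Ici 0) := by
    refine monotoneOn_of_deriv_nonneg (convex_Ici 0)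
      (fun x _ => (hG x).continuousAt.continuousWithinAt)
      (fun x _ => (hG x).differentiableAt.differentiableWithinAt) fun x _ => ?_
    have h := mul_le_mul_of_nonneg_right (show 1 - x ≤ exp (-x) by linarith [add_one_le_exp (-x)])
      (exp_pos x).le
    rw [← exp_add, neg_add_cancel, exp_zero] at h
    rw [(hG x).deriv]
    linarith
  have := hmono (Set.mem_Ici.2 le_rfl) hs hs
  simp only [G, zero_mul, exp_zero, sub_self, mul_zero] at this
  linarith

theorem sub_mul_exp_sub_exp_le (x y : ℝ) :
    (x - y) * (exp x - exp y) ≤ (x - y) ^ 2 * (exp x + exp y) / 2 := by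
  wlog hyx : y ≤ x with H
  · linear_combination H y x (le_of_not_ge hyx)
  have key := mul_le_mul_of_nonneg_left (two_mul_exp_sub_one_le (sub_nonneg.2 hyx))
    (by positivity : 0 ≤ (x - y) * exp y / 2)
  have hx : exp x = exp (x - y) * exp y := by rw [← exp_add, sub_add_cancel]
  rw [hx]
  linear_combination key

theorem sub_mul_exp_mul_sub_exp_mul_le {θ : ℝ} (hθ : 0 ≤ θ) (u v : ℝ) :
    (u - v) * (exp (θ * u) - exp (θ * v)) ≤
      θ / 2 * (u - v) ^ 2 * (exp (θ * u) + exp (θ * v)) := by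
  rcases hθ.eq_or_lt with rfl | hθ
  · simp
  refine le_of_mul_le_mul_left ?_ hθ
  linear_combination sub_mul_exp_sub_exp_le (θ * u) (θ * v)

end Real

section

open Real

variable {N : ℕ}

theorem two_mul_sum_mul_exp_le_of_perm {α : Type*} [Fintype α] (τ : Equiv.Perm α) {S Δ : α → ℝ}
    (hS : ∀ x, S (τ x) = S x - Δ x) (hΔ : ∀ x, Δ (τ x) = -Δ x) {θ : ℝ} (hθ : 0 ≤ θ) :
    2 * ∑ x, Δ x * exp (θ * S x) ≤ θ * ∑ x, Δ x ^ 2 * exp (θ * S x) := by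
  have h1 : ∑ x, Δ x * exp (θ * S x) = -∑ x, Δ x * exp (θ * (S x - Δ x)) := by
    rw [← Equiv.sum_comp τ, ← Finset.sum_neg_distrib]
    simp only [hS, hΔ, neg_mul]
  have h2 : ∑ x, Δ x ^ 2 * exp (θ * S x) = ∑ x, Δ x ^ 2 * exp (θ * (S x - Δ x)) := by
    rw [← Equiv.sum_comp τ]
    simp only [hS, hΔ, neg_sq]
  calc 2 * ∑ x, Δ x * exp (θ * S x)
      = ∑ x, Δ x * (exp (θ * S x) - exp (θ * (S x - Δ x))) := by
        rw [two_mul]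
        nth_rewrite 2 [h1]
        rw [← sub_eq_add_neg, ← Finset.sum_sub_distrib]
        simp_rw [← mul_sub]
    _ ≤ ∑ x, θ / 2 * Δ x ^ 2 * (exp (θ * S x) + exp (θ * (S x - Δ x))) :=
        Finset.sum_le_sum fun x _ => by
          simpa only [sub_sub_cancel] using sub_mul_exp_mul_sub_exp_mul_le hθ (S x) (S x - Δ x)
    _ = θ * ∑ x, Δ x ^ 2 * exp (θ * S x) := by
        simp only [mul_add, Finset.sum_add_distrib, mul_assoc, ← Finset.mul_sum, ← h2]
        ring

theorem hasDerivAt_sum_exp_mul {α : Type*} [Fintype α] (f : α → ℝ) (θ : ℝ) :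
    HasDerivAt (fun θ => ∑ x, exp (θ * f x)) (∑ x, f x * exp (θ * f x)) θ :=
  HasDerivAt.fun_sum fun x _ => ((hasDerivAt_mul_const (f x)).exp).congr_deriv (mul_comm _ _)

theorem le_mul_exp_sq_of_hasDerivAt {f f' : ℝ → ℝ} {c T : ℝ} (hf : ∀ x, HasDerivAt f (f' x) x)
    (hf' : ∀ x ∈ Set.Ioo 0 T, f' x ≤ 2 * c * x * f x) (hT : 0 ≤ T) :
    f T ≤ f 0 * exp (c * T ^ 2) := by
  let g : ℝ → ℝ := fun x => f x * exp (-c * x ^ 2)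
  have hg : ∀ x, HasDerivAt g ((f' x - 2 * c * x * f x) * exp (-c * x ^ 2)) x := fun x =>
    ((hf x).mul ((hasDerivAt_pow 2 x).const_mul (-c)).exp).congr_deriv (by push_cast; ring)
  have hanti : AntitoneOn g (Set.Icc 0 T) := by
    refine antitoneOn_of_deriv_nonpos (convex_Icc 0 T)
      (fun x _ => (hg x).continuousAt.continuousWithinAt)
      (fun x _ => (hg x).differentiableAt.differentiableWithinAt) fun x hx => ?_
    rw [interior_Icc] at hx
    rw [(hg x).deriv]
    exact mul_nonpos_of_nonpos_of_nonneg (by linarith [hf' x hx]) (exp_pos _).le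
  have := hanti (Set.left_mem_Icc.2 hT) (Set.right_mem_Icc.2 hT) hT
  simp only [g, neg_mul, exp_neg, ne_eq, OfNat.ofNat_ne_zero, not_false_eq_true, zero_pow,
    mul_zero, exp_zero, inv_one, mul_one] at this
  rwa [← div_eq_mul_inv, div_le_iff₀ (exp_pos _)] at this

def swapDelta (d : Fin N → Fin N → ℝ) (i j : Fin N) (σ : Equiv.Perm (Fin N)) : ℝ :=
  d i (σ i) + d j (σ j) - d i (σ j) - d j (σ i)

theorem combSum_mul_swap (d : Fin N → Fin N → ℝ) (i j : Fin N) (σ : Equiv.Perm (Fin N)) :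
    combSum N d (σ * Equiv.swap i j) = combSum N d σ - swapDelta d i j σ := by
  rcases eq_or_ne i j with rfl | hij
  · simp [swapDelta, ← Equiv.Perm.one_def]
  have h : ∑ k, (d k ((σ * Equiv.swap i j) k) - d k (σ k)) =
      (d i (σ j) - d i (σ i)) + (d j (σ i) - d j (σ j)) := by
    rw [Fintype.sum_eq_add i j hij fun k hk => by
      rw [Equiv.Perm.mul_apply, Equiv.swap_apply_of_ne_of_ne hk.1 hk.2, sub_self]]
    simp
  rw [Finset.sum_sub_distrib] at h
  simp only [combSum, swapDelta]
  linarith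

theorem swapDelta_mul_swap (d : Fin N → Fin N → ℝ) (i j : Fin N) (σ : Equiv.Perm (Fin N)) :
    swapDelta d i j (σ * Equiv.swap i j) = -swapDelta d i j σ := by
  simp only [swapDelta, Equiv.Perm.mul_apply, Equiv.swap_apply_left, Equiv.swap_apply_right]
  ring

theorem abs_swapDelta_le {d : Fin N → Fin N → ℝ} {B : ℝ} (hB : ∀ i j, |d i j| ≤ B)
    (i j : Fin N) (σ : Equiv.Perm (Fin N)) : |swapDelta d i j σ| ≤ 4 * B := by
  obtain ⟨h₁, h₁'⟩ := abs_le.1 (hB i (σ i))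
  obtain ⟨h₂, h₂'⟩ := abs_le.1 (hB j (σ j))
  obtain ⟨h₃, h₃'⟩ := abs_le.1 (hB i (σ j))
  obtain ⟨h₄, h₄'⟩ := abs_le.1 (hB j (σ i))
  rw [abs_le, swapDelta]
  constructor <;> linarith

theorem sum_sum_swapDelta {d : Fin N → Fin N → ℝ} (hrow : ∀ i, ∑ j, d i j = 0)
    (σ : Equiv.Perm (Fin N)) : ∑ i, ∑ j, swapDelta d i j σ = 2 * N * combSum N d σ := by
  have hrow' : ∀ i, ∑ j, d i (σ j) = 0 := fun i => (Equiv.sum_comp σ (d i)).trans (hrow i)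
  have hcol : ∑ i, ∑ j, d j (σ i) = 0 := by
    rw [Finset.sum_comm]
    exact Finset.sum_eq_zero fun j _ => hrow' j
  simp only [swapDelta, Finset.sum_sub_distrib, Finset.sum_add_distrib, Finset.sum_const,
    Finset.card_univ, Fintype.card_fin, nsmul_eq_mul, hrow', hcol, ← Finset.mul_sum, combSum]
  ring

theorem sum_sum_sq_swapDelta_le (d : Fin N → Fin N → ℝ) (σ : Equiv.Perm (Fin N)) :
    ∑ i, ∑ j, swapDelta d i j σ ^ 2 ≤
      8 * N * ∑ i, d i (σ i) ^ 2 + 8 * ∑ i, ∑ j, d i j ^ 2 := by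
  have hrow : ∀ i, ∑ j, d i (σ j) ^ 2 = ∑ j, d i j ^ 2 :=
    fun i => Equiv.sum_comp σ (fun j => d i j ^ 2)
  have hcol : ∑ i, ∑ j, d j (σ i) ^ 2 = ∑ i, ∑ j, d i j ^ 2 := by
    rw [Finset.sum_comm]
    exact Finset.sum_congr rfl fun j _ => hrow j
  calc ∑ i, ∑ j, swapDelta d i j σ ^ 2
      ≤ ∑ i, ∑ j, 4 * (d i (σ i) ^ 2 + d j (σ j) ^ 2 + d i (σ j) ^ 2 + d j (σ i) ^ 2) := by
        gcongr with i _ j _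
        rw [swapDelta]
        nlinarith [sq_nonneg (d i (σ i) - d j (σ j)), sq_nonneg (d i (σ j) - d j (σ i)),
          sq_nonneg (d i (σ i) + d j (σ j) + d i (σ j) + d j (σ i))]
    _ = 8 * N * ∑ i, d i (σ i) ^ 2 + 8 * ∑ i, ∑ j, d i j ^ 2 := by
        simp only [← Finset.mul_sum, Finset.sum_add_distrib, Finset.sum_const, Finset.card_univ,
          Fintype.card_fin, nsmul_eq_mul, hrow, hcol]
        ring

theorem sum_sum_sum_mul_comm {α ι κ : Type*} [Fintype α] [Fintype ι] [Fintype κ]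
    (f : α → ι → κ → ℝ) (g : α → ℝ) :
    ∑ a, (∑ i, ∑ j, f a i j) * g a = ∑ i, ∑ j, ∑ a, f a i j * g a := by
  simp only [Finset.sum_mul]
  rw [Finset.sum_comm]
  exact Finset.sum_congr rfl fun _ _ => Finset.sum_comm

theorem sum_sq_diag_mul_exp_le {d : Fin N → Fin N → ℝ} {B θ : ℝ} (hB : ∀ i j, |d i j| ≤ B)
    (hθ : 0 ≤ θ) (i j : Fin N) :
    ∑ σ, d i (σ i) ^ 2 * exp (θ * combSum N d σ) ≤
      exp (4 * θ * B) * ∑ σ, d i (σ j) ^ 2 * exp (θ * combSum N d σ) := by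
  conv_lhs => rw [← Equiv.sum_comp (Equiv.mulRight (Equiv.swap i j))]
  rw [Finset.mul_sum]
  refine Finset.sum_le_sum fun σ _ => ?_
  simp only [Equiv.coe_mulRight, Equiv.Perm.mul_apply, Equiv.swap_apply_left, combSum_mul_swap]
  have hexp : exp (θ * (combSum N d σ - swapDelta d i j σ)) ≤
      exp (4 * θ * B) * exp (θ * combSum N d σ) := by
    rw [← exp_add, exp_le_exp]
    nlinarith [neg_le_of_abs_le (abs_swapDelta_le hB i j σ)]
  calc d i (σ j) ^ 2 * exp (θ * (combSum N d σ - swapDelta d i j σ))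
      ≤ d i (σ j) ^ 2 * (exp (4 * θ * B) * exp (θ * combSum N d σ)) :=
        mul_le_mul_of_nonneg_left hexp (sq_nonneg _)
    _ = exp (4 * θ * B) * (d i (σ j) ^ 2 * exp (θ * combSum N d σ)) := by ring

theorem card_mul_sum_sq_diag_mul_exp_le {d : Fin N → Fin N → ℝ} {B θ : ℝ}
    (hB : ∀ i j, |d i j| ≤ B) (hθ : 0 ≤ θ) :
    N * ∑ σ, (∑ i, d i (σ i) ^ 2) * exp (θ * combSum N d σ) ≤
      exp (4 * θ * B) * (∑ i, ∑ j, d i j ^ 2) * ∑ σ, exp (θ * combSum N d σ) := by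
  calc (N : ℝ) * ∑ σ, (∑ i, d i (σ i) ^ 2) * exp (θ * combSum N d σ)
      = ∑ i, ∑ _j : Fin N, ∑ σ, d i (σ i) ^ 2 * exp (θ * combSum N d σ) := by
        simp only [Finset.sum_const, Finset.card_univ, Fintype.card_fin, nsmul_eq_mul,
          Finset.sum_mul, ← Finset.mul_sum]
        rw [Finset.sum_comm]
    _ ≤ ∑ i, ∑ j, exp (4 * θ * B) * ∑ σ, d i (σ j) ^ 2 * exp (θ * combSum N d σ) := by
        gcongr with i _ j _
        exact sum_sq_diag_mul_exp_le hB hθ i j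
    _ = exp (4 * θ * B) * ∑ σ, (∑ i, ∑ j, d i (σ j) ^ 2) * exp (θ * combSum N d σ) := by
        simp only [sum_sum_sum_mul_comm, Finset.mul_sum]
    _ = exp (4 * θ * B) * (∑ i, ∑ j, d i j ^ 2) * ∑ σ, exp (θ * combSum N d σ) := by
        simp only [fun σ i => Equiv.sum_comp σ (fun j => d i j ^ 2)]
        rw [← Finset.mul_sum, mul_assoc (exp _)]

theorem card_mul_sum_combSum_mul_exp_le {d : Fin N → Fin N → ℝ} {B θ : ℝ}
    (hrow : ∀ i, ∑ j, d i j = 0) (hB : ∀ i j, |d i j| ≤ B) (hθ : 0 ≤ θ) :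
    N * ∑ σ, combSum N d σ * exp (θ * combSum N d σ) ≤
      2 * θ * (∑ i, ∑ j, d i j ^ 2) * (1 + exp (4 * θ * B)) * ∑ σ, exp (θ * combSum N d σ) := by
  set V := ∑ i, ∑ j, d i j ^ 2
  have hpair : ∀ i j, 2 * ∑ σ, swapDelta d i j σ * exp (θ * combSum N d σ) ≤
      θ * ∑ σ, swapDelta d i j σ ^ 2 * exp (θ * combSum N d σ) := fun i j =>
    two_mul_sum_mul_exp_le_of_perm (Equiv.mulRight (Equiv.swap i j))
      (combSum_mul_swap d i j) (swapDelta_mul_swap d i j) hθ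
  refine le_of_mul_le_mul_left ?_ (four_pos : (0 : ℝ) < 4)
  calc 4 * (N * ∑ σ, combSum N d σ * exp (θ * combSum N d σ))
      = 2 * ∑ σ, (∑ i, ∑ j, swapDelta d i j σ) * exp (θ * combSum N d σ) := by
        simp only [sum_sum_swapDelta hrow, Finset.mul_sum]
        exact Finset.sum_congr rfl fun σ _ => by ring
    _ = ∑ i, ∑ j, 2 * ∑ σ, swapDelta d i j σ * exp (θ * combSum N d σ) := by
        simp only [sum_sum_sum_mul_comm, Finset.mul_sum]
    _ ≤ ∑ i, ∑ j, θ * ∑ σ, swapDelta d i j σ ^ 2 * exp (θ * combSum N d σ) :=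
        Finset.sum_le_sum fun i _ => Finset.sum_le_sum fun j _ => hpair i j
    _ = θ * ∑ σ, (∑ i, ∑ j, swapDelta d i j σ ^ 2) * exp (θ * combSum N d σ) := by
        simp only [sum_sum_sum_mul_comm, Finset.mul_sum]
    _ ≤ θ * ∑ σ, (8 * N * ∑ i, d i (σ i) ^ 2 + 8 * V) * exp (θ * combSum N d σ) := by
        gcongr with σ
        exact sum_sum_sq_swapDelta_le d σ
    _ = θ * (8 * (N * ∑ σ, (∑ i, d i (σ i) ^ 2) * exp (θ * combSum N d σ)) +
          8 * V * ∑ σ, exp (θ * combSum N d σ)) := by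
        simp only [add_mul, Finset.sum_add_distrib, mul_assoc, ← Finset.mul_sum]
    _ ≤ θ * (8 * (exp (4 * θ * B) * V * ∑ σ, exp (θ * combSum N d σ)) +
          8 * V * ∑ σ, exp (θ * combSum N d σ)) := by
        gcongr θ * (8 * ?_ + _)
        exact card_mul_sum_sq_diag_mul_exp_le hB hθ
    _ = 4 * (2 * θ * V * (1 + exp (4 * θ * B)) * ∑ σ, exp (θ * combSum N d σ)) := by ring

theorem sum_exp_combSum_le {d : Fin N → Fin N → ℝ} {B θ : ℝ} (hrow : ∀ i, ∑ j, d i j = 0)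
    (hB : ∀ i j, |d i j| ≤ B) (hθ : 0 ≤ θ) :
    ∑ σ, exp (θ * combSum N d σ) ≤
      N.factorial * exp ((∑ i, ∑ j, d i j ^ 2) / N * (1 + exp (4 * θ * B)) * θ ^ 2) := by
  rcases Nat.eq_zero_or_pos N with rfl | hN
  · simp [combSum]
  have hB0 : 0 ≤ B := (abs_nonneg _).trans (hB ⟨0, hN⟩ ⟨0, hN⟩)
  have hN' : (0 : ℝ) < N := Nat.cast_pos.2 hN
  calc ∑ σ, exp (θ * combSum N d σ)
      ≤ (∑ σ, exp (0 * combSum N d σ)) *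
          exp ((∑ i, ∑ j, d i j ^ 2) / N * (1 + exp (4 * θ * B)) * θ ^ 2) := by
        refine le_mul_exp_sq_of_hasDerivAt (fun x => hasDerivAt_sum_exp_mul _ x)
          (fun x hx => le_of_mul_le_mul_left ?_ hN') hθ
        have hE : exp (4 * x * B) ≤ exp (4 * θ * B) := exp_le_exp.2 (by nlinarith [hx.2.le])
        calc (N : ℝ) * ∑ σ, combSum N d σ * exp (x * combSum N d σ)
            ≤ 2 * x * (∑ i, ∑ j, d i j ^ 2) * (1 + exp (4 * x * B)) *
                ∑ σ, exp (x * combSum N d σ) :=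
              card_mul_sum_combSum_mul_exp_le hrow hB hx.1.le
          _ ≤ 2 * x * (∑ i, ∑ j, d i j ^ 2) * (1 + exp (4 * θ * B)) *
                ∑ σ, exp (x * combSum N d σ) := by
              have := hx.1.le
              gcongr
          _ = N * (2 * ((∑ i, ∑ j, d i j ^ 2) / N * (1 + exp (4 * θ * B))) * x *
                ∑ σ, exp (x * combSum N d σ)) := by
              field_simp
    _ = _ := by simp [Fintype.card_perm]

theorem permProb_le_exp_mul_sum_exp (f : Equiv.Perm (Fin N) → ℝ) {θ : ℝ} (hθ : 0 ≤ θ) (t : ℝ) :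
    permProb N (fun σ => t ≤ f σ) ≤ exp (-(θ * t)) * (∑ σ, exp (θ * f σ)) / N.factorial := by
  rw [permProb, Finset.mul_sum]
  gcongr with σ
  split_ifs with h
  · rw [← exp_add]
    exact one_le_exp (by nlinarith)
  · positivity

theorem mul_one_add_exp_bernstein_le {s b : ℝ} (hs : 0 ≤ s) (hb : 0 ≤ b) :
    s * (1 + exp (4 * b / (6 * s + 2 * √2 * b))) ≤ 3 * s + √2 * b := by
  rcases hs.eq_or_lt with rfl | hs
  · simp only [zero_mul, mul_zero, zero_add]
    positivity
  have h2 : (1.414 : ℝ) ≤ √2 := le_sqrt_of_sq_le (by norm_num)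
  have h2b := mul_le_mul_of_nonneg_right h2 hb
  have hD : 0 < 6 * s + 2 * √2 * b := by positivity
  -- for `b ≤ 2s` the exponent is below `log 2`, otherwise it is below `√2 < 3/2`
  rcases le_or_gt b (2 * s) with hbs | hbs
  · have hE : exp (4 * b / (6 * s + 2 * √2 * b)) ≤ 2 := by
      calc exp (4 * b / (6 * s + 2 * √2 * b)) ≤ exp (log 2) :=
            exp_le_exp.2 (((div_le_iff₀ hD).2 (by nlinarith)).trans log_two_gt_d9.le)
        _ = 2 := exp_log two_pos
    nlinarith
  · have he : exp (3 / 2) ≤ 4.5 := by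
      have h3 : exp (3 / 2) ^ 2 = exp 1 ^ 3 := by
        rw [← exp_nat_mul, ← exp_nat_mul]
        norm_num
      have h1 := pow_le_pow_left₀ (exp_pos 1).le exp_one_lt_d9.le 3
      nlinarith [exp_pos (3 / 2)]
    have hE : exp (4 * b / (6 * s + 2 * √2 * b)) ≤ 4.5 :=
      (exp_le_exp.2 ((div_le_iff₀ hD).2 (by nlinarith))).trans he
    nlinarith

theorem bernstein_exponent_le {s B t θ : ℝ} (hs : 0 ≤ s) (hB : 0 ≤ B) (ht : 0 ≤ t)
    (hθ : θ = t / (6 * s + 2 * √2 * B * t)) :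
    -(θ * t) + s * (1 + exp (4 * θ * B)) * θ ^ 2 ≤ -(t ^ 2) / (12 * s + 4 * √2 * B * t) := by
  have hD2 : 12 * s + 4 * √2 * B * t = 2 * (6 * s + 2 * √2 * B * t) := by ring
  rcases (show 0 ≤ 6 * s + 2 * √2 * B * t by positivity).eq_or_lt with hD | hD
  · simp [hθ, ← hD, hD2]
  have hsE : s * (1 + exp (4 * θ * B)) ≤ (6 * s + 2 * √2 * B * t) / 2 := by
    have h := mul_one_add_exp_bernstein_le hs (mul_nonneg hB ht)
    rw [show 4 * θ * B = 4 * (B * t) / (6 * s + 2 * √2 * (B * t)) by rw [hθ]; ring]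
    linarith
  calc -(θ * t) + s * (1 + exp (4 * θ * B)) * θ ^ 2
      ≤ -(θ * t) + (6 * s + 2 * √2 * B * t) / 2 * θ ^ 2 := by gcongr
    _ = -(t ^ 2) / (12 * s + 4 * √2 * B * t) := by
      rw [hθ, hD2]
      field_simp
      ring

theorem sum_dmat_eq_zero (a : Fin N → Fin N → ℝ) (i : Fin N) : ∑ j, dmat N a i j = 0 := by
  have hN : (N : ℝ) ≠ 0 := Nat.cast_ne_zero.2 (Fin.pos i).ne'
  simp only [dmat, Finset.sum_add_distrib, Finset.sum_sub_distrib, ← Finset.sum_div,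
    Finset.sum_const, Finset.card_univ, Fintype.card_fin, nsmul_eq_mul]
  rw [Finset.sum_comm]
  field_simp
  ring

theorem combSum_dmat (a : Fin N → Fin N → ℝ) (σ : Equiv.Perm (Fin N)) :
    combSum N (dmat N a) σ = combSum N a σ - muA N a := by
  rcases Nat.eq_zero_or_pos N with rfl | hN
  · simp [combSum, muA]
  have hN' : (N : ℝ) ≠ 0 := Nat.cast_ne_zero.2 hN.ne'
  have hcol : ∑ i, ∑ k, a k (σ i) = ∑ k, ∑ l, a k l := by
    rw [Equiv.sum_comp σ (fun j => ∑ k, a k j)]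
    exact Finset.sum_comm
  simp only [combSum, muA, dmat, Finset.sum_add_distrib, Finset.sum_sub_distrib, ← Finset.sum_div,
    Finset.sum_const, Finset.card_univ, Fintype.card_fin, nsmul_eq_mul, hcol]
  field_simp
  ring

theorem abs_dmat_le_BA (a : Fin N → Fin N → ℝ) (i j : Fin N) : |dmat N a i j| ≤ BA N a :=
  (Finite.le_ciSup (fun j => |dmat N a i j|) j).trans
    (Finite.le_ciSup (fun i => ⨆ j, |dmat N a i j|) i)

theorem BA_nonneg (a : Fin N → Fin N → ℝ) : 0 ≤ BA N a :=
  Real.iSup_nonneg fun _ => Real.iSup_nonneg fun _ => abs_nonneg _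

theorem sum_sq_dmat_div_le_sigmaA2 (a : Fin N → Fin N → ℝ) :
    (∑ i, ∑ j, dmat N a i j ^ 2) / N ≤ sigmaA2 N a := by
  -- for `N = 1` the factor `(N - 1)⁻¹` is `0⁻¹ = 0`, but then `dmat N a = 0`
  rcases lt_or_ge N 2 with hN | hN
  · interval_cases N <;> simp [sigmaA2, dmat]
  have hN' : (2 : ℝ) ≤ N := by exact_mod_cast hN
  exact div_le_div_of_nonneg_left (by positivity) (by linarith) (by linarith)

theorem sigmaA2_nonneg (a : Fin N → Fin N → ℝ) : 0 ≤ sigmaA2 N a :=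
  (div_nonneg (by positivity) (Nat.cast_nonneg N)).trans (sum_sq_dmat_div_le_sigmaA2 a)

end

theorem combinatorial_bernstein_general
    (N : ℕ) (a : Fin N → Fin N → ℝ) (t : ℝ) (ht : 0 ≤ t) :
    permProb N (fun π => t ≤ combSum N a π - muA N a)
      ≤ Real.exp (-(t ^ 2) / (12 * sigmaA2 N a + 4 * Real.sqrt 2 * BA N a * t)) := by
  set θ := t / (6 * sigmaA2 N a + 2 * √2 * BA N a * t) with hθ
  have hθ0 : 0 ≤ θ := by
    have := sigmaA2_nonneg a
    have := BA_nonneg a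
    positivity
  set d := dmat N a
  set E := Real.exp (4 * θ * BA N a)
  calc permProb N (fun π => t ≤ combSum N a π - muA N a)
      = permProb N (fun π => t ≤ combSum N d π) := by simp only [d, combSum_dmat]
    _ ≤ Real.exp (-(θ * t)) * (∑ π, Real.exp (θ * combSum N d π)) / N.factorial :=
        permProb_le_exp_mul_sum_exp _ hθ0 t
    _ ≤ Real.exp (-(θ * t)) * (N.factorial *
          Real.exp ((∑ i, ∑ j, d i j ^ 2) / N * (1 + E) * θ ^ 2)) / N.factorial := by
        gcongr
        exact sum_exp_combSum_le (sum_dmat_eq_zero a) (abs_dmat_le_BA a) hθ0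
    _ = Real.exp (-(θ * t) + (∑ i, ∑ j, d i j ^ 2) / N * (1 + E) * θ ^ 2) := by
        rw [Real.exp_add]
        field_simp
    _ ≤ Real.exp (-(θ * t) + sigmaA2 N a * (1 + E) * θ ^ 2) := by
        gcongr
        exact sum_sq_dmat_div_le_sigmaA2 a
    _ ≤ _ := Real.exp_le_exp.2 (bernstein_exponent_le (sigmaA2_nonneg a) (BA_nonneg a) ht hθ)

/-- Combinatorial Bernstein inequality. -/
theorem combinatorial_bernstein
    (N : ℕ) (hN : 1 ≤ N) (a : Fin N → Fin N → ℝ) (t : ℝ) (ht : 0 ≤ t) :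
    permProb N (fun π => t ≤ combSum N a π - muA N a)
      ≤ Real.exp (-(t ^ 2) / (12 * sigmaA2 N a + 4 * Real.sqrt 2 * BA N a * t)) :=
  combinatorial_bernstein_general N a t ht
end

section
/- Hoeffding's convex ordering inequality: let 𝒵 be a real vector space, let z_1,…,z_N ∈ 𝒵 be arbitrary (not necessarily distinct) points, let f : 𝒵 → ℝ be convex, and let n ∈ {1,…,N}. Then the expectation of f applied to the sum of a size-n sample drawn uniformly without replacement is at most that for sampling with replacement; explicitly, (1/N!) · Σ_{σ ∈ S_N} f( Σ_{i=1}^n z_{σ(i)} ) ≤ (1/N^n) · Σ_{j : [n] → [N]} f( Σ_{i=1}^n z_{j(i)} ), where the right-hand sum ranges over all N^n functions j from [n] to [N]. -/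
/-!
With `permSum z f j = ∑ σ, f (∑ i, z (σ (j i)))`, averaging over the relabellings `σ` of the
ground set makes the left side `permSum` at an injective index map `e` and the right side the mean
of `permSum` over all index maps `j`. As `permSum` is invariant under relabelling, every `j` may be
taken of the form `e ∘ g`. The mean of `∑ i, x (g i + t)` over the `n` cyclic shifts `t` is
`∑ k, x k`, so the sum without replacement is a conditional expectation of the sum with
replacement, and Jensen's inequality gives `permSum z f e ≤ permSum z f (e ∘ g)`.
-/

open Finset

section

variable {𝒵 : Type*} [AddCommGroup 𝒵] {f : 𝒵 → ℝ}

theorem ConvexOn.map_sum_le_sum_map_sum_add_div_card [Module ℝ 𝒵] {ι : Type*} [AddGroup ι]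
    [Fintype ι] (hf : ConvexOn ℝ Set.univ f) (x : ι → 𝒵) (g : ι → ι) :
    f (∑ k, x k) ≤ (∑ t, f (∑ i, x (g i + t))) / Fintype.card ι := by
  have hcard : (0 : ℝ) < Fintype.card ι := by exact_mod_cast Fintype.card_pos
  have hmean : ∑ k, x k = ∑ t, (Fintype.card ι : ℝ)⁻¹ • ∑ i, x (g i + t) := by
    have hshift : ∀ i, ∑ t, x (g i + t) = ∑ k, x k := fun i =>
      Fintype.sum_equiv (Equiv.addLeft (g i)) _ _ fun _ => rfl
    rw [← Finset.smul_sum, Finset.sum_comm]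
    simp only [hshift, sum_const, card_univ, ← Nat.cast_smul_eq_nsmul ℝ, smul_smul,
      inv_mul_cancel₀ hcard.ne', one_smul]
  calc f (∑ k, x k) = f (∑ t, (Fintype.card ι : ℝ)⁻¹ • ∑ i, x (g i + t)) := by rw [hmean]
    _ ≤ ∑ t, (Fintype.card ι : ℝ)⁻¹ • f (∑ i, x (g i + t)) :=
      hf.map_sum_le (fun _ _ => by positivity)
        (by simp [sum_const, card_univ, hcard.ne']) fun _ _ => Set.mem_univ _
    _ = (∑ t, f (∑ i, x (g i + t))) / Fintype.card ι := by
      simp only [smul_eq_mul, inv_mul_eq_div, sum_div]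

theorem Equiv.Perm.exists_apply_mem_range {α ι : Type*} [Fintype α] [DecidableEq α] [Fintype ι]
    (e : ι ↪ α) (j : ι → α) : ∃ τ : Equiv.Perm α, ∀ i, τ (j i) ∈ Set.range e := by
  have himage : #(univ.image j) ≤ Fintype.card ι := card_image_le.trans_eq card_univ
  obtain ⟨u, hju, -, hu⟩ := exists_subsuperset_card_eq (subset_univ _) himage
    (by simpa using Fintype.card_le_of_embedding e)
  obtain ⟨τ, hτ⟩ := Equiv.Perm.exists_map_finset_eq u (univ.map e) (by simpa using hu)
  refine ⟨τ, fun i => ?_⟩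
  have : τ (j i) ∈ u.map τ.toEmbedding := mem_map_of_mem _ (hju (mem_image_of_mem j (mem_univ i)))
  simpa [hτ] using this

section permSum

variable {α ι : Type*} [Fintype α] [DecidableEq α] [Fintype ι]

noncomputable def permSum (z : α → 𝒵) (f : 𝒵 → ℝ) (j : ι → α) : ℝ :=
  ∑ σ : Equiv.Perm α, f (∑ i, z (σ (j i)))

variable (z : α → 𝒵)

theorem permSum_perm_comp (τ : Equiv.Perm α) (j : ι → α) :
    permSum z f (τ ∘ j) = permSum z f j :=
  Fintype.sum_equiv (Equiv.mulRight τ) _ _ fun _ => rfl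

theorem sum_permSum [DecidableEq ι] :
    ∑ j : ι → α, permSum z f j = (Fintype.card α).factorial * ∑ j : ι → α, f (∑ i, z (j i)) := by
  have hrelabel : ∀ σ : Equiv.Perm α,
      ∑ j : ι → α, f (∑ i, z (σ (j i))) = ∑ j : ι → α, f (∑ i, z (j i)) := fun σ =>
    Fintype.sum_equiv (Equiv.arrowCongr (Equiv.refl ι) σ) _ _ fun _ => rfl
  simp only [permSum]
  rw [sum_comm]
  simp only [hrelabel, sum_const, card_univ, Fintype.card_perm, nsmul_eq_mul]

theorem permSum_le_permSum_comp [Module ℝ 𝒵] [AddGroup ι] (hf : ConvexOn ℝ Set.univ f) (e : ι ↪ α)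
    (g : ι → ι) : permSum z f e ≤ permSum z f (e ∘ g) := by
  have hshift : ∀ t, permSum z f (e ∘ (· + t) ∘ g) = permSum z f (e ∘ g) := fun t => by
    rw [← permSum_perm_comp z ((Equiv.addRight t).viaFintypeEmbedding e) (e ∘ g)]
    congr 1
    funext i
    simp
  calc permSum z f e
      ≤ ∑ σ : Equiv.Perm α, (∑ t, f (∑ i, z (σ (e (g i + t))))) / Fintype.card ι :=
        sum_le_sum fun σ _ => hf.map_sum_le_sum_map_sum_add_div_card (fun k => z (σ (e k))) g
    _ = (∑ t, permSum z f (e ∘ (· + t) ∘ g)) / Fintype.card ι := by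
        rw [← sum_div, sum_comm]
        rfl
    _ = permSum z f (e ∘ g) := by
        have hcard : (Fintype.card ι : ℝ) ≠ 0 := by exact_mod_cast Fintype.card_ne_zero
        simp only [hshift, sum_const, card_univ, nsmul_eq_mul]
        field_simp

theorem permSum_embedding_le [Module ℝ 𝒵] [AddGroup ι] (hf : ConvexOn ℝ Set.univ f) (e : ι ↪ α)
    (j : ι → α) : permSum z f e ≤ permSum z f j := by
  obtain ⟨τ, hτ⟩ := Equiv.Perm.exists_apply_mem_range e j
  choose g hg using hτ
  have hj : j = τ.symm ∘ (e ∘ g) := funext fun i => by simp [hg]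
  rw [hj, permSum_perm_comp]
  exact permSum_le_permSum_comp z hf e g

end permSum

end

/-- Hoeffding's convex ordering inequality: for a convex `f` on a real vector space,
sampling `n` points uniformly without replacement from `{z_1,…,z_N}` gives a smaller
expectation of `f` of the sum than sampling with replacement. -/
theorem hoeffding_convex_ordering
    {𝒵 : Type*} [AddCommGroup 𝒵] [Module ℝ 𝒵]
    (N n : ℕ) (hn1 : 1 ≤ n) (hnN : n ≤ N)
    (z : Fin N → 𝒵) (f : 𝒵 → ℝ) (hf : ConvexOn ℝ Set.univ f) :
    (∑ σ : Equiv.Perm (Fin N), f (∑ i : Fin n, z (σ (Fin.castLE hnN i))))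
        / (Nat.factorial N : ℝ)
      ≤ (∑ j : Fin n → Fin N, f (∑ i : Fin n, z (j i))) / ((N : ℝ) ^ n) := by
  have : NeZero n := ⟨by omega⟩
  have hN : (0 : ℝ) < N := by exact_mod_cast (by omega : 0 < N)
  have key : (N : ℝ) ^ n * permSum z f (Fin.castLEEmb hnN)
      ≤ N.factorial * ∑ j : Fin n → Fin N, f (∑ i, z (j i)) :=
    calc (N : ℝ) ^ n * permSum z f (Fin.castLEEmb hnN)
        = ∑ _j : Fin n → Fin N, permSum z f (Fin.castLEEmb hnN) := by simp
      _ ≤ ∑ j : Fin n → Fin N, permSum z f j :=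
          sum_le_sum fun j _ => permSum_embedding_le z hf _ j
      _ = N.factorial * ∑ j : Fin n → Fin N, f (∑ i, z (j i)) := by
          rw [sum_permSum, Fintype.card_fin]
  rw [div_le_div_iff₀ (by positivity) (pow_pos hN n)]
  change permSum z f (Fin.castLEEmb hnN) * _ ≤ _
  linarith
end
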